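/- For all t > 0 and all ε, δ > 0 with ε < min(1, 1/t) and δ < min(1, 1/t²), it holds that G((1−δ)t − ε)/G(t) ≤ 1 + 8(ε + εt + δ + δt²), where G(t) = 2(1 − Φ(t)). -/

import Mathlib

noncomputable section

open MeasureTheory Real

def gaussDensity (t : ℝ) : ℝ := Real.exp (-(t ^ 2) / 2) / Real.sqrt (2 * Real.pi)

def Phi (t : ℝ) : ℝ := ∫ x in Set.Iic t, gaussDensity x

def Gtail (t : ℝ) : ℝ := 2 * (1 - Phi t)

/-!
Write `s = (1 - δ) t - ε` and `a = t - s = δ t + ε`. Since `G s - G t = 2 ∫_s^t φ` and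
`G t = 2 ∫_t^∞ φ`, it suffices to show `∫_s^t φ ≤ 8 R ∫_t^∞ φ` with `R = ε + ε t + δ + δ t²`.

Numerator: completing the square, `φ x ≤ φ t · e^{t (t - x)}`, so `∫_s^t φ ≤ a e^{t a} φ t`, and
`t a = δ t² + ε t < 2` with `e² < 8`.

Denominator: since `(φ g)' = φ (g' - x g)`, a bounded `g` with `x g - g' ≤ 1` on `(t, ∞)` has
`(φ g)' ≥ -φ` there, whence `φ t · g t ≤ ∫_t^∞ φ`. The Mills-type choices `g x = 1 / (1 + x)`
(for `t ≤ 1`) and `g x = x / (1 + x²)` (for `t ≥ 1`) both give `a φ t ≤ R ∫_t^∞ φ`.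
-/

open Set Filter Topology ProbabilityTheory

theorem le_integral_Ioi_of_hasDerivAt_of_tendsto {h h' f : ℝ → ℝ} {a : ℝ}
    (hderiv : ∀ x ∈ Ici a, HasDerivAt h (h' x) x) (hle : ∀ x ∈ Ioi a, -h' x ≤ f x)
    (hf : IntegrableOn f (Ioi a)) (hf0 : ∀ x ∈ Ioi a, 0 ≤ f x)
    (htendsto : Tendsto h atTop (𝓝 0)) :
    h a ≤ ∫ x in Ioi a, f x := by
  have hbound (b : ℝ) (hab : a ≤ b) : h a - h b ≤ ∫ x in Ioi a, f x := calc
    h a - h b = (-h) b - (-h) a := by simp only [Pi.neg_apply]; ring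
    _ ≤ ∫ x in a..b, f x :=
      intervalIntegral.sub_le_integral_of_hasDeriv_right_of_le hab
        (fun x hx => (hderiv x hx.1).continuousAt.neg.continuousWithinAt)
        (fun x hx => (hderiv x hx.1.le).neg.hasDerivWithinAt)
        (by rw [integrableOn_Icc_iff_integrableOn_Ioc]; exact hf.mono_set Ioc_subset_Ioi_self)
        (fun x hx => hle x hx.1)
    _ ≤ ∫ x in Ioi a, f x := by
      rw [intervalIntegral.integral_of_le hab]
      exact setIntegral_mono_set hf (ae_restrict_of_forall_mem measurableSet_Ioi hf0)
        (Eventually.of_forall Ioc_subset_Ioi_self)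
  simpa using le_of_tendsto (htendsto.const_sub (h a)) (eventually_atTop.2 ⟨a, hbound⟩)

theorem gaussDensity_eq_gaussianPDFReal : gaussDensity = gaussianPDFReal 0 1 := by
  ext x
  simp [gaussDensity, gaussianPDFReal, div_eq_inv_mul]

theorem integrable_gaussDensity : Integrable gaussDensity :=
  gaussDensity_eq_gaussianPDFReal ▸ integrable_gaussianPDFReal 0 1

theorem integral_gaussDensity : ∫ x, gaussDensity x = 1 :=
  gaussDensity_eq_gaussianPDFReal ▸ integral_gaussianPDFReal_eq_one 0 one_ne_zero

theorem gaussDensity_pos (x : ℝ) : 0 < gaussDensity x := by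
  unfold gaussDensity; positivity

theorem hasDerivAt_gaussDensity (x : ℝ) :
    HasDerivAt gaussDensity (-x * gaussDensity x) x := by
  have h : HasDerivAt (fun t : ℝ => -(t ^ 2) / 2) (-x) x :=
    ((hasDerivAt_pow 2 x).fun_neg.div_const 2).congr_deriv (by ring)
  exact (h.exp.div_const _).congr_deriv (by simp only [gaussDensity]; ring)

theorem tendsto_gaussDensity_atTop : Tendsto gaussDensity atTop (𝓝 0) := by
  have h : Tendsto (fun x : ℝ => -(x ^ 2) / 2) atTop atBot :=
    (tendsto_neg_atTop_atBot.comp (tendsto_pow_atTop two_ne_zero)).atBot_div_const two_pos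
  rw [← zero_div (√(2 * π))]
  exact (tendsto_exp_atBot.comp h).div_const _

theorem gaussDensity_le_mul_exp (t x : ℝ) :
    gaussDensity x ≤ gaussDensity t * exp (t * (t - x)) := by
  simp only [gaussDensity, div_mul_eq_mul_div, ← exp_add]
  gcongr
  nlinarith [sq_nonneg (t - x)]

theorem gaussDensity_mul_le_integral_Ioi {g g' : ℝ → ℝ} {a : ℝ}
    (hg : ∀ x ∈ Ici a, HasDerivAt g (g' x) x) (hg_le : ∀ x ∈ Ici a, |g x| ≤ 1)
    (hgg' : ∀ x ∈ Ioi a, x * g x - g' x ≤ 1) :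
    gaussDensity a * g a ≤ ∫ x in Ioi a, gaussDensity x := by
  refine le_integral_Ioi_of_hasDerivAt_of_tendsto
    (fun x hx => (hasDerivAt_gaussDensity x).mul (hg x hx)) (fun x hx => ?_)
    integrable_gaussDensity.integrableOn (fun x _ => (gaussDensity_pos x).le) ?_
  · have := mul_le_mul_of_nonneg_left (hgg' x hx) (gaussDensity_pos x).le
    linarith
  · refine squeeze_zero_norm' ?_ tendsto_gaussDensity_atTop
    filter_upwards [eventually_ge_atTop a] with x hx
    rw [Pi.mul_apply, norm_mul, Real.norm_of_nonneg (gaussDensity_pos x).le]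
    exact mul_le_of_le_one_right (gaussDensity_pos x).le (hg_le x hx)

theorem gaussDensity_div_one_add_le_integral_Ioi {a : ℝ} (ha : 0 ≤ a) :
    gaussDensity a / (1 + a) ≤ ∫ x in Ioi a, gaussDensity x := by
  have hderiv (x : ℝ) (hx : 0 ≤ x) :
      HasDerivAt (fun x => 1 / (1 + x)) (-1 / (1 + x) ^ 2) x :=
    ((hasDerivAt_const x 1).div ((hasDerivAt_id x).const_add 1) (by positivity)).congr_deriv
      (by simp only [id]; ring)
  have := gaussDensity_mul_le_integral_Ioi (g := fun x => 1 / (1 + x))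
    (fun x hx => hderiv x (ha.trans hx)) (fun x hx => ?_) (fun x hx => ?_)
  · rwa [mul_one_div] at this
  · have hx0 : 0 ≤ x := ha.trans hx
    rw [abs_of_nonneg (by positivity), div_le_one (by positivity)]
    linarith
  · have hx0 : 0 < x := ha.trans_lt hx
    field_simp
    nlinarith

theorem gaussDensity_mul_div_one_add_sq_le_integral_Ioi (a : ℝ) :
    gaussDensity a * (a / (1 + a ^ 2)) ≤ ∫ x in Ioi a, gaussDensity x := by
  have hderiv (x : ℝ) :
      HasDerivAt (fun x => x / (1 + x ^ 2)) ((1 - x ^ 2) / (1 + x ^ 2) ^ 2) x := by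
    have := (hasDerivAt_id x).div ((hasDerivAt_pow 2 x).const_add 1) (by positivity)
    refine this.congr_deriv ?_
    simp only [id]
    ring
  refine gaussDensity_mul_le_integral_Ioi (fun x _ => hderiv x) (fun x _ => ?_) (fun x _ => ?_)
  · rw [abs_div, abs_of_pos (by positivity : (0 : ℝ) < 1 + x ^ 2), div_le_one (by positivity)]
    nlinarith [sq_nonneg (|x| - 1), sq_abs x]
  · have : (0 : ℝ) < 1 + x ^ 2 := by positivity
    field_simp
    nlinarith

theorem integral_gaussDensity_le_mul_exp {s t : ℝ} (hst : s ≤ t) (ht : 0 ≤ t) :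
    ∫ x in s..t, gaussDensity x ≤ (t - s) * exp (t * (t - s)) * gaussDensity t := by
  have hbound : ∀ x ∈ uIoc s t, ‖gaussDensity x‖ ≤ gaussDensity t * exp (t * (t - s)) := by
    intro x hx
    rw [uIoc_of_le hst] at hx
    rw [Real.norm_of_nonneg (gaussDensity_pos x).le]
    refine (gaussDensity_le_mul_exp t x).trans
      (mul_le_mul_of_nonneg_left ?_ (gaussDensity_pos t).le)
    gcongr
    exact hx.1.le
  calc ∫ x in s..t, gaussDensity x
      ≤ ‖∫ x in s..t, gaussDensity x‖ := le_norm_self _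
    _ ≤ gaussDensity t * exp (t * (t - s)) * |t - s| :=
      intervalIntegral.norm_integral_le_of_norm_le_const hbound
    _ = (t - s) * exp (t * (t - s)) * gaussDensity t := by
      rw [abs_of_nonneg (sub_nonneg.2 hst)]; ring

theorem mul_gaussDensity_le_mul_integral_Ioi {t ε δ : ℝ} (ht : 0 < t) (hε : 0 ≤ ε)
    (hδ : 0 ≤ δ) :
    (δ * t + ε) * gaussDensity t ≤
      (ε + ε * t + δ + δ * t ^ 2) * ∫ x in Ioi t, gaussDensity x := by
  have hφ := gaussDensity_pos t
  rcases le_total t 1 with ht1 | ht1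
  · calc (δ * t + ε) * gaussDensity t
        = (δ * t + ε) * (1 + t) * (gaussDensity t / (1 + t)) := by field_simp
      _ ≤ (ε + ε * t + δ + δ * t ^ 2) * ∫ x in Ioi t, gaussDensity x := by
        gcongr ?_ * ?_
        · nlinarith
        · exact gaussDensity_div_one_add_le_integral_Ioi ht.le
  · calc (δ * t + ε) * gaussDensity t
        = (δ * t + ε) * (1 + t ^ 2) / t * (gaussDensity t * (t / (1 + t ^ 2))) := by
          field_simp
      _ ≤ (ε + ε * t + δ + δ * t ^ 2) * ∫ x in Ioi t, gaussDensity x := by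
        gcongr ?_ * ?_
        · rw [div_le_iff₀ ht]
          nlinarith
        · exact gaussDensity_mul_div_one_add_sq_le_integral_Ioi t

theorem Gtail_eq_two_mul_integral_Ioi (t : ℝ) : Gtail t = 2 * ∫ x in Ioi t, gaussDensity x := by
  rw [Gtail, Phi, ← integral_gaussDensity, ← intervalIntegral.integral_Iic_add_Ioi (b := t)
    integrable_gaussDensity.integrableOn integrable_gaussDensity.integrableOn]
  ring

theorem Gtail_sub_Gtail (s t : ℝ) : Gtail s - Gtail t = 2 * ∫ x in s..t, gaussDensity x := by
  rw [Gtail, Gtail, ← intervalIntegral.integral_Iic_sub_Iic integrable_gaussDensity.integrableOn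
    integrable_gaussDensity.integrableOn, Phi, Phi]
  ring

theorem exp_two_lt_eight : exp 2 < 8 := by
  have := exp_one_lt_d9
  have : exp 2 = exp 1 ^ 2 := by rw [← exp_nat_mul]; norm_num
  nlinarith [exp_pos 1]

/-- for all `t > 0`, `0 < ε < min(1, 1/t)` and `0 < δ < min(1, 1/t²)`,
`G((1−δ)t − ε)/G(t) ≤ 1 + 8(ε + εt + δ + δt²)`. -/
theorem gaussian_tail_ratio_bound (t ε δ : ℝ) (ht : 0 < t)
    (hε0 : 0 < ε) (hε : ε < min 1 (1 / t))
    (hδ0 : 0 < δ) (hδ : δ < min 1 (1 / t ^ 2)) :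
    Gtail ((1 - δ) * t - ε) / Gtail t ≤ 1 + 8 * (ε + ε * t + δ + δ * t ^ 2) := by
  set s := (1 - δ) * t - ε
  set R := ε + ε * t + δ + δ * t ^ 2
  have hεt : ε * t < 1 := (lt_div_iff₀ ht).1 (hε.trans_le (min_le_right _ _))
  have hδt : δ * t ^ 2 < 1 := (lt_div_iff₀ (by positivity)).1 (hδ.trans_le (min_le_right _ _))
  have hts : t - s = δ * t + ε := by ring
  have hst : s ≤ t := by rw [← sub_nonneg, hts]; positivity
  have hexp : exp (t * (t - s)) ≤ 8 :=
    (exp_le_exp.2 (by nlinarith)).trans exp_two_lt_eight.le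
  have htail_pos : 0 < ∫ x in Ioi t, gaussDensity x :=
    (div_pos (gaussDensity_pos t) (by linarith)).trans_le
      (gaussDensity_div_one_add_le_integral_Ioi ht.le)
  have hG_pos : 0 < Gtail t := by
    rw [Gtail_eq_two_mul_integral_Ioi]; exact mul_pos two_pos htail_pos
  rw [div_le_iff₀ hG_pos]
  calc Gtail s = Gtail t + 2 * ∫ x in s..t, gaussDensity x := by
        rw [← Gtail_sub_Gtail]; ring
    _ ≤ Gtail t + 2 * (exp (t * (t - s)) * ((δ * t + ε) * gaussDensity t)) := by
        rw [← hts]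
        linarith [integral_gaussDensity_le_mul_exp hst ht.le]
    _ ≤ Gtail t + 2 * (8 * (R * ∫ x in Ioi t, gaussDensity x)) := by
        gcongr _ + 2 * (?_ * ?_)
        · exact mul_nonneg (by positivity) (gaussDensity_pos t).le
        · exact mul_gaussDensity_le_mul_integral_Ioi ht hε0.le hδ0.le
    _ = (1 + 8 * R) * Gtail t := by rw [Gtail_eq_two_mul_integral_Ioi]; ring
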